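/- Let f be a Boolean network of dimension n and x, y ∈ 𝔹^n with x →*_{mp,f} y (y reachable from x under the most permissive semantics). Then there exists a sequence of at most 3n most permissive transitions from x to y, consisting first of at most n transitions from Boolean states to dynamic states, then at most n transitions between dynamic states, then at most n transitions from dynamic states to Boolean states. -/

import Mathlib

inductive PState : Type
  | zero | up | down | one
deriving DecidableEq

def PState.ofBool : Bool → PState
  | false => .zero
  | true  => .one

def PState.isBool (p : PState) : Prop := p = .zero ∨ p = .one

abbrev BN (n : ℕ) := (Fin n → Bool) → Fin n → Bool

def gamma {n : ℕ} (x : Fin n → PState) : Set (Fin n → Bool) :=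
  {b | ∀ i (v : Bool), x i = PState.ofBool v → b i = v}

def mpStep {n : ℕ} (f : BN n) (x y : Fin n → PState) : Prop :=
  ∃ i : Fin n, x i ≠ y i ∧ (∀ j, j ≠ i → x j = y j) ∧
    ((y i = .up ∧ x i ≠ .one ∧ ∃ z ∈ gamma x, f z i = true) ∨
     (y i = .one ∧ x i = .up) ∨
     (y i = .down ∧ x i ≠ .zero ∧ ∃ z ∈ gamma x, f z i = false) ∨
     (y i = .zero ∧ x i = .down))

def mpReachP {n : ℕ} (f : BN n) : (Fin n → PState) → (Fin n → PState) → Prop :=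
  Relation.ReflTransGen (mpStep f)

def embed {n : ℕ} (x : Fin n → Bool) : Fin n → PState := fun i => PState.ofBool (x i)

def mpReach {n : ℕ} (f : BN n) (x : Fin n → Bool) : Set (Fin n → Bool) :=
  {y | mpReachP f (embed x) (embed y)}

def cubeSet {n : ℕ} (h : Fin n → Option Bool) : Set (Fin n → Bool) :=
  {z | ∀ i b, h i = some b → z i = b}

def smaller {n : ℕ} (h h' : Fin n → Option Bool) : Prop :=
  ∀ i b, h' i = some b → h i = some b

def kClosed {n : ℕ} (f : BN n) (K : Finset (Fin n)) (h : Fin n → Option Bool) : Prop :=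
  ∀ z ∈ cubeSet h, ∀ i ∈ K, h i = none ∨ h i = some (f z i)

def closedBy {n : ℕ} (f : BN n) (h : Fin n → Option Bool) : Prop :=
  ∀ z ∈ cubeSet h, f z ∈ cubeSet h

def smallestClosed {n : ℕ} (f : BN n) (x : Fin n → Bool) (h : Fin n → Option Bool) : Prop :=
  x ∈ cubeSet h ∧ closedBy f h ∧
    ∀ h', x ∈ cubeSet h' → closedBy f h' → smaller h h'

def minClosed {n : ℕ} (f : BN n) (h : Fin n → Option Bool) : Prop :=
  closedBy f h ∧ ∀ h', closedBy f h' → smaller h' h → h' = h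

def faStep {n : ℕ} (f : BN n) (x y : Fin n → Bool) : Prop :=
  ∃ i : Fin n, x i ≠ y i ∧ (∀ j, j ≠ i → x j = y j) ∧ y i = f x i

def aStep {n : ℕ} (f : BN n) (x y : Fin n → Bool) : Prop :=
  x ≠ y ∧ ∀ i, x i ≠ y i → y i = f x i

def mnStep {n m : ℕ} (F : (Fin n → Fin (m+1)) → Fin n → ℤ)
    (x y : Fin n → Fin (m+1)) : Prop :=
  x ≠ y ∧ ∀ i, x i ≠ y i → ((y i : ℤ) = (x i : ℤ) + F x i)

def beta {n m : ℕ} (x : Fin n → Fin (m+1)) : Set (Fin n → Bool) :=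
  {b | ∀ i, ((x i : ℕ) = 0 → b i = false) ∧ ((x i : ℕ) = m → b i = true)}

def refines {n m : ℕ} (F : (Fin n → Fin (m+1)) → Fin n → ℤ) (f : BN n) : Prop :=
  ∀ x i, (F x i > 0 → ∃ b ∈ beta x, f b i = true) ∧
         (F x i < 0 → ∃ b ∈ beta x, f b i = false)

def alpha {n m : ℕ} (x : Fin n → Fin (m+1)) : Set (Fin n → PState) :=
  {p | ∀ i, ((x i : ℕ) = 0 ↔ p i = .zero) ∧ ((x i : ℕ) = m ↔ p i = .one)}

def bdStep {n : ℕ} (f : BN n) (L : Finset (Fin n)) (a b : Fin n → PState) : Prop :=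
  mpStep f a b ∧ ∃ j, a j ≠ b j ∧ j ∉ L ∧ (a j).isBool ∧ ¬ (b j).isBool

def exhaustive {n : ℕ} (f : BN n) (x : Fin n → Bool) (L : Finset (Fin n))
    (zhat : Fin n → PState) : Prop :=
  Relation.ReflTransGen (bdStep f L) (embed x) zhat ∧ ∀ z', ¬ bdStep f L zhat z'

/-!
Follow an mp-trajectory from `x` to `y` and keep two configurations: `A` freezes every component
at the first dynamic state it takes, `B` records its latest dynamic state, and both keep the
value of the components that have not moved yet. The trajectory, `A` and `B` agree on these, and
`gamma` only sees Boolean components, so each step of the trajectory that enters a dynamic state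
stays valid from `A`, and from any mix of `A` and `B`. Hence `x` reaches
`A` by Boolean-to-dynamic moves, `A` reaches `B` by switching the differing components in any
order, and `B` reaches `y` by letting each dynamic `B i` settle on `y i`.
-/

open Function Relation

section StepSeq

variable {α : Type*} {r : α → α → Prop}

def StepSeq (r : α → α → Prop) (k : ℕ) (a b : α) : Prop :=
  ∃ w : ℕ → α, w 0 = a ∧ w k = b ∧ ∀ t < k, r (w t) (w (t + 1))

theorem StepSeq.refl (a : α) : StepSeq r 0 a a :=
  ⟨fun _ => a, rfl, rfl, fun _ h => absurd h (Nat.not_lt_zero _)⟩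

theorem StepSeq.head {k : ℕ} {a b c : α} (hab : r a b) (hbc : StepSeq r k b c) :
    StepSeq r (k + 1) a c := by
  obtain ⟨w, h0, hk, hw⟩ := hbc
  refine ⟨fun t => if t = 0 then a else w (t - 1), by simp, by simp [hk], fun t ht => ?_⟩
  rcases t with _ | t
  · simpa [h0] using hab
  · simpa using hw t (by omega)

theorem StepSeq.exists_append₃ {r₁ r₂ r₃ : α → α → Prop} {k₁ k₂ k₃ : ℕ} {a b c d : α}
    (h₁ : StepSeq r₁ k₁ a b) (h₂ : StepSeq r₂ k₂ b c) (h₃ : StepSeq r₃ k₃ c d) :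
    ∃ w : ℕ → α, w 0 = a ∧ w (k₁ + k₂ + k₃) = d ∧
      (∀ t < k₁, r₁ (w t) (w (t + 1))) ∧
      (∀ t, k₁ ≤ t → t < k₁ + k₂ → r₂ (w t) (w (t + 1))) ∧
      (∀ t, k₁ + k₂ ≤ t → t < k₁ + k₂ + k₃ → r₃ (w t) (w (t + 1))) := by
  obtain ⟨w₁, h₁0, h₁k, hw₁⟩ := h₁
  obtain ⟨w₂, h₂0, h₂k, hw₂⟩ := h₂
  obtain ⟨w₃, h₃0, h₃k, hw₃⟩ := h₃
  set w : ℕ → α := fun t =>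
    if t ≤ k₁ then w₁ t else if t ≤ k₁ + k₂ then w₂ (t - k₁) else w₃ (t - (k₁ + k₂))
  have e₁ : ∀ t ≤ k₁, w t = w₁ t := fun t ht => if_pos ht
  have e₂ : ∀ t, k₁ ≤ t → t ≤ k₁ + k₂ → w t = w₂ (t - k₁) := by
    intro t h h'
    rcases h.eq_or_lt with rfl | h
    · simp [w, h₁k, h₂0]
    · simp [w, h', Nat.not_le.2 h]
  have e₃ : ∀ t, k₁ + k₂ ≤ t → w t = w₃ (t - (k₁ + k₂)) := by
    intro t h
    rcases h.eq_or_lt with rfl | h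
    · simp [e₂ _ (by omega) le_rfl, h₂k, h₃0]
    · simp [w, Nat.not_le.2 h, show ¬ t ≤ k₁ by omega]
  refine ⟨w, by simp [w, h₁0], by rw [e₃ _ (by omega)]; simpa using h₃k, ?_, ?_, ?_⟩
  · intro t ht
    rw [e₁ t ht.le, e₁ (t + 1) ht]
    exact hw₁ t ht
  · intro t h h'
    rw [e₂ t h h'.le, e₂ (t + 1) (by omega) h', show t + 1 - k₁ = t - k₁ + 1 by omega]
    exact hw₂ _ (by omega)
  · intro t h h'
    rw [e₃ t h, e₃ (t + 1) (by omega), show t + 1 - (k₁ + k₂) = t - (k₁ + k₂) + 1 by omega]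
    exact hw₃ _ (by omega)

theorem Relation.ReflTransGen.exists_stepSeq_le {a b : α} (μ : α → ℕ)
    (hμ : ∀ a b, r a b → μ b < μ a) (h : ReflTransGen r a b) : ∃ k ≤ μ a, StepSeq r k a b := by
  induction h using Relation.ReflTransGen.head_induction_on with
  | refl => exact ⟨0, Nat.zero_le _, .refl _⟩
  | head hac _ ih =>
    obtain ⟨k, hk, hseq⟩ := ih
    exact ⟨k + 1, Nat.succ_le_of_lt (hk.trans_lt (hμ _ _ hac)), hseq.head hac⟩

theorem exists_stepSeq_le_card_of_update {ι β : Type*} [Fintype ι] [DecidableEq ι]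
    {r : (ι → β) → (ι → β) → Prop} {a b : ι → β}
    (h : ∀ c : ι → β, (∀ j, c j = a j ∨ c j = b j) → ∀ i, c i = a i → a i ≠ b i →
      r c (update c i (b i))) :
    ∃ k ≤ Fintype.card ι, StepSeq r k a b := by
  suffices ∀ (s : Finset ι) (c : ι → β), (∀ j, c j = a j ∨ c j = b j) →
      (∀ j, c j ≠ b j → j ∈ s) → ∃ k ≤ s.card, StepSeq r k c b from
    this Finset.univ a (fun _ => .inl rfl) fun j _ => Finset.mem_univ j
  intro s
  induction s using Finset.induction_on with
  | empty =>
    intro c _ hs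
    obtain rfl : c = b := funext fun j => by_contra fun hj => by simpa using hs j hj
    exact ⟨0, le_rfl, .refl c⟩
  | insert i s hi ih =>
    intro c hmix hs
    by_cases hci : c i = b i
    · obtain ⟨k, hk, hseq⟩ := ih c hmix fun j hj =>
        (Finset.mem_insert.1 (hs j hj)).resolve_left (by rintro rfl; exact hj hci)
      exact ⟨k, hk.trans (Finset.card_le_card (Finset.subset_insert i s)), hseq⟩
    have hca : c i = a i := (hmix i).resolve_right hci
    have hmix' : ∀ j, update c i (b i) j = a j ∨ update c i (b i) j = b j := by
      intro j
      rcases eq_or_ne j i with rfl | hj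
      · simp
      · simpa [hj] using hmix j
    have hs' : ∀ j, update c i (b i) j ≠ b j → j ∈ s := by
      intro j hj
      rcases eq_or_ne j i with rfl | hji
      · simp at hj
      · rw [update_of_ne hji] at hj
        exact (Finset.mem_insert.1 (hs j hj)).resolve_left hji
    obtain ⟨k, hk, hseq⟩ := ih _ hmix' hs'
    refine ⟨k + 1, by rw [Finset.card_insert_of_notMem hi]; omega, ?_⟩
    exact hseq.head (h c hmix i hca (hca ▸ hci))

end StepSeq

instance : DecidablePred PState.isBool :=
  fun p => inferInstanceAs (Decidable (p = .zero ∨ p = .one))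

def PState.settle : PState → PState
  | .up => .one
  | .down => .zero
  | p => p

namespace PState

theorem isBool_ofBool (v : Bool) : (ofBool v).isBool := by
  cases v <;> simp [ofBool, isBool]

theorem isBool_settle (p : PState) : p.settle.isBool := by
  cases p <;> simp [settle, isBool]

theorem settle_eq_self {p : PState} (hp : p.isBool) : p.settle = p := by
  rcases hp with rfl | rfl <;> rfl

end PState

section MostPermissive

variable {n : ℕ} {f : BN n}

theorem gamma_mono {a c : Fin n → PState} (h : ∀ j, (c j).isBool → a j = c j) :
    gamma a ⊆ gamma c := fun z hz j v hv =>
  hz j v (by rw [h j (hv ▸ PState.isBool_ofBool v), hv])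

def Supported (f : BN n) (G : Set (Fin n → Bool)) (i : Fin n) (p : PState) : Prop :=
  (p = .up → ∃ z ∈ G, f z i = true) ∧ (p = .down → ∃ z ∈ G, f z i = false)

theorem Supported.mono {G G' : Set (Fin n → Bool)} {i : Fin n} {p : PState} (hG : G ⊆ G')
    (h : Supported f G i p) : Supported f G' i p :=
  ⟨fun hp => (h.1 hp).imp fun _ hz => ⟨hG hz.1, hz.2⟩,
    fun hp => (h.2 hp).imp fun _ hz => ⟨hG hz.1, hz.2⟩⟩

theorem Supported.of_isBool {G : Set (Fin n → Bool)} {i : Fin n} {p : PState} (hp : p.isBool) :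
    Supported f G i p := by
  rcases hp with rfl | rfl <;> simp [Supported]

def MpMove (f : BN n) (a : Fin n → PState) (i : Fin n) (p : PState) : Prop :=
  (p = .up ∧ a i ≠ .one ∧ ∃ z ∈ gamma a, f z i = true) ∨ (p = .one ∧ a i = .up) ∨
    (p = .down ∧ a i ≠ .zero ∧ ∃ z ∈ gamma a, f z i = false) ∨ (p = .zero ∧ a i = .down)

theorem mpStep_update {a : Fin n → PState} {i : Fin n} {p : PState} (hne : a i ≠ p)
    (hm : MpMove f a i p) : mpStep f a (update a i p) :=
  ⟨i, by simpa using hne, fun j hj => (update_of_ne hj p a).symm, by rw [update_self]; exact hm⟩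

theorem mpStep.exists_update {a b : Fin n → PState} (h : mpStep f a b) :
    ∃ i p, a i ≠ p ∧ b = update a i p ∧ MpMove f a i p := by
  obtain ⟨i, hne, heq, hm⟩ := h
  refine ⟨i, b i, hne, funext fun j => ?_, hm⟩
  rcases eq_or_ne j i with rfl | hj
  · simp
  · simp [hj, heq j hj]

namespace MpMove

variable {a c : Fin n → PState} {i : Fin n} {p : PState}

theorem supported (h : MpMove f a i p) : Supported f (gamma a) i p := by
  rcases h with ⟨rfl, -, hz⟩ | ⟨rfl, -⟩ | ⟨rfl, -, hz⟩ | ⟨rfl, -⟩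
  · exact ⟨fun _ => hz, (nomatch ·)⟩
  · exact .of_isBool (.inr rfl)
  · exact ⟨(nomatch ·), fun _ => hz⟩
  · exact .of_isBool (.inl rfl)

theorem eq_settle (h : MpMove f a i p) (hne : a i ≠ p) (hp : p.isBool) :
    ¬ (a i).isBool ∧ p = (a i).settle := by
  rcases h with ⟨rfl, -⟩ | ⟨rfl, h⟩ | ⟨rfl, -⟩ | ⟨rfl, h⟩ <;>
    simp_all [PState.isBool, PState.settle]

theorem transfer (h : MpMove f a i p) (hi : c i = a i) (hg : gamma a ⊆ gamma c) :
    MpMove f c i p := by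
  rcases h with ⟨hp, ha, z, hz, hf⟩ | h | ⟨hp, ha, z, hz, hf⟩ | h
  · exact .inl ⟨hp, hi ▸ ha, z, hg hz, hf⟩
  · exact .inr (.inl (hi ▸ h))
  · exact .inr (.inr (.inl ⟨hp, hi ▸ ha, z, hg hz, hf⟩))
  · exact .inr (.inr (.inr (hi ▸ h)))

theorem of_supported (hc : ¬ (c i).isBool) (hp : ¬ p.isBool) (hne : c i ≠ p)
    (hs : Supported f (gamma c) i p) : MpMove f c i p := by
  unfold MpMove
  cases hci : c i <;> cases p <;> simp_all [PState.isBool, Supported]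

theorem settle (hc : ¬ (c i).isBool) : MpMove f c i (c i).settle := by
  unfold MpMove
  cases hci : c i <;> simp_all [PState.isBool, PState.settle]

end MpMove

def mpStepWith (f : BN n) (P : PState → PState → Prop) (a b : Fin n → PState) : Prop :=
  mpStep f a b ∧ ∀ j, a j ≠ b j → P (a j) (b j)

theorem mpStepWith_update {P : PState → PState → Prop} {a : Fin n → PState} {i : Fin n}
    {p : PState} (hne : a i ≠ p) (hm : MpMove f a i p) (hP : P (a i) p) :
    mpStepWith f P a (update a i p) := by
  refine ⟨mpStep_update hne hm, fun j hj => ?_⟩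
  rcases eq_or_ne j i with rfl | hji
  · simpa using hP
  · simp [hji] at hj

theorem card_isBool_lt_of_mpStepWith {a b : Fin n → PState}
    (h : mpStepWith f (fun p q => p.isBool ∧ ¬ q.isBool) a b) :
    (Finset.univ.filter fun j => (b j).isBool).card <
      (Finset.univ.filter fun j => (a j).isBool).card := by
  obtain ⟨⟨i, hi, -⟩, hshape⟩ := h
  refine Finset.card_lt_card ((Finset.ssubset_iff_of_subset fun j => ?_).2 ⟨i, ?_, ?_⟩)
  · simp only [Finset.mem_filter, Finset.mem_univ, true_and]
    intro hb
    by_contra ha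
    exact (hshape j fun h => ha (h ▸ hb)).2 hb
  · simpa using (hshape i hi).1
  · simpa using (hshape i hi).2

end MostPermissive

section ThreePhase

variable {n : ℕ} {f : BN n} {x : Fin n → Bool}

/-- Invariant along a trajectory ending at `b`: `A` freezes each component at its first dynamic
state, `B` records its latest one. -/
structure ThreePhase (f : BN n) (x : Fin n → Bool) (b A B : Fin n → PState) : Prop where
  reach : ReflTransGen (mpStepWith f fun p q => p.isBool ∧ ¬ q.isBool) (embed x) A
  eq_of_isBool : ∀ j, (A j).isBool ∨ (B j).isBool → A j = B j
  eq_or_eq_settle : ∀ j, b j = B j ∨ b j = (B j).settle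
  supported : ∀ j, Supported f (gamma A) j (B j)

namespace ThreePhase

variable {b A B : Fin n → PState}

theorem init : ThreePhase f x (embed x) (embed x) (embed x) where
  reach := .refl
  eq_of_isBool _ _ := rfl
  eq_or_eq_settle _ := .inl rfl
  supported j := .of_isBool (PState.isBool_ofBool (x j))

theorem gamma_subset (hW : ThreePhase f x b A B) : gamma b ⊆ gamma A :=
  gamma_mono fun j hA => by
    have hAB := hW.eq_of_isBool j (.inl hA)
    rcases hW.eq_or_eq_settle j with h | h <;> simp [h, ← hAB, PState.settle_eq_self hA]

theorem update_of_isBool (hW : ThreePhase f x b A B) {i : Fin n} {p : PState} (hne : b i ≠ p)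
    (hm : MpMove f b i p) (hA : (A i).isBool) :
    ThreePhase f x (update b i p) (update A i p) (update B i p) := by
  have hAb : A i = b i := by
    have := hW.eq_of_isBool i (.inl hA)
    rcases hW.eq_or_eq_settle i with h | h <;> simp_all [PState.settle_eq_self]
  have hp : ¬ p.isBool := fun hp => (hm.eq_settle hne hp).1 (hAb ▸ hA)
  have hAA : gamma A ⊆ gamma (update A i p) := gamma_mono fun j hj => by
    rcases eq_or_ne j i with rfl | hji
    · simp_all
    · rw [update_of_ne hji]
  have hstep : mpStepWith f (fun p q => p.isBool ∧ ¬ q.isBool) A (update A i p) :=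
    mpStepWith_update (hAb ▸ hne) (hm.transfer hAb hW.gamma_subset) ⟨hA, hp⟩
  refine ⟨hW.reach.tail hstep, fun j => ?_, fun j => ?_, fun j => ?_⟩ <;>
    rcases eq_or_ne j i with rfl | hji
  · simp
  · simpa [hji] using hW.eq_of_isBool j
  · simp
  · simpa [hji] using hW.eq_or_eq_settle j
  · simpa using hm.supported.mono (hW.gamma_subset.trans hAA)
  · simpa [hji] using (hW.supported j).mono hAA

theorem update_of_not_isBool (hW : ThreePhase f x b A B) {i : Fin n} {p : PState}
    (hm : MpMove f b i p) (hA : ¬ (A i).isBool) (hp : ¬ p.isBool) :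
    ThreePhase f x (update b i p) A (update B i p) := by
  refine ⟨hW.reach, fun j => ?_, fun j => ?_, fun j => ?_⟩ <;>
    rcases eq_or_ne j i with rfl | hji
  · simp [hA, hp]
  · simpa [hji] using hW.eq_of_isBool j
  · simp
  · simpa [hji] using hW.eq_or_eq_settle j
  · simpa using hm.supported.mono hW.gamma_subset
  · simpa [hji] using hW.supported j

theorem update_settle (hW : ThreePhase f x b A B) {i : Fin n} {p : PState}
    (hne : b i ≠ p) (hm : MpMove f b i p) (hp : p.isBool) :
    ThreePhase f x (update b i p) A B := by
  obtain ⟨hb, rfl⟩ := hm.eq_settle hne hp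
  have hbB : b i = B i :=
    (hW.eq_or_eq_settle i).resolve_right fun h => hb (h ▸ PState.isBool_settle _)
  refine ⟨hW.reach, hW.eq_of_isBool, fun j => ?_, hW.supported⟩
  rcases eq_or_ne j i with rfl | hji
  · simp [hbB]
  · simpa [hji] using hW.eq_or_eq_settle j

theorem exists_of_mpStep (hW : ThreePhase f x b A B) {b' : Fin n → PState}
    (h : mpStep f b b') : ∃ A' B', ThreePhase f x b' A' B' := by
  obtain ⟨i, p, hne, rfl, hm⟩ := h.exists_update
  by_cases hp : p.isBool
  · exact ⟨A, B, hW.update_settle hne hm hp⟩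
  by_cases hA : (A i).isBool
  · exact ⟨_, _, hW.update_of_isBool hne hm hA⟩
  · exact ⟨A, _, hW.update_of_not_isBool hm hA hp⟩

theorem exists_phase₁ (hW : ThreePhase f x b A B) :
    ∃ k ≤ n, StepSeq (mpStepWith f fun p q => p.isBool ∧ ¬ q.isBool) k (embed x) A := by
  obtain ⟨k, hk, hseq⟩ := hW.reach.exists_stepSeq_le _ fun _ _ => card_isBool_lt_of_mpStepWith
  exact ⟨k, hk.trans ((Finset.card_le_univ _).trans_eq (Fintype.card_fin n)), hseq⟩

theorem exists_phase₂ (hW : ThreePhase f x b A B) :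
    ∃ k ≤ n, StepSeq (mpStepWith f fun p q => ¬ p.isBool ∧ ¬ q.isBool) k A B := by
  have step : ∀ c : Fin n → PState, (∀ j, c j = A j ∨ c j = B j) → ∀ i, c i = A i → A i ≠ B i →
      mpStepWith f (fun p q => ¬ p.isBool ∧ ¬ q.isBool) c (update c i (B i)) := by
    intro c hc i hci hne
    have hA : ¬ (A i).isBool := fun h => hne (hW.eq_of_isBool i (.inl h))
    have hB : ¬ (B i).isBool := fun h => hne (hW.eq_of_isBool i (.inr h))
    have hAc : gamma A ⊆ gamma c := gamma_mono fun j hj => by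
      rcases hc j with h | h
      · exact h.symm
      · exact h ▸ hW.eq_of_isBool j (.inr (h ▸ hj))
    rw [← hci] at hA hne
    exact mpStepWith_update hne (.of_supported hA hB hne ((hW.supported i).mono hAc)) ⟨hA, hB⟩
  simpa using exists_stepSeq_le_card_of_update step

theorem exists_phase₃ {y : Fin n → Bool} (hW : ThreePhase f x (embed y) A B) :
    ∃ k ≤ n, StepSeq (mpStepWith f fun p q => ¬ p.isBool ∧ q.isBool) k B (embed y) := by
  have step : ∀ c : Fin n → PState, (∀ j, c j = B j ∨ c j = embed y j) → ∀ i, c i = B i →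
      B i ≠ embed y i →
      mpStepWith f (fun p q => ¬ p.isBool ∧ q.isBool) c (update c i (embed y i)) := by
    intro c _ i hci hne
    have hy : embed y i = (B i).settle := (hW.eq_or_eq_settle i).resolve_left hne.symm
    have hB : ¬ (B i).isBool := fun h => hne (by rw [hy, PState.settle_eq_self h])
    rw [hy] at hne ⊢
    rw [← hci] at hB hne ⊢
    exact mpStepWith_update hne (.settle hB) ⟨hB, PState.isBool_settle _⟩
  simpa using exists_stepSeq_le_card_of_update step

end ThreePhase

theorem exists_threePhase {b : Fin n → PState} (h : mpReachP f (embed x) b) :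
    ∃ A B, ThreePhase f x b A B := by
  induction h with
  | refl => exact ⟨_, _, .init⟩
  | tail _ hstep ih =>
    obtain ⟨A, B, hW⟩ := ih
    exact hW.exists_of_mpStep hstep

end ThreePhase

theorem stmt8 {n : ℕ} (f : BN n) (x y : Fin n → Bool)
    (h : y ∈ mpReach f x) :
    ∃ (k1 k2 k3 : ℕ) (w : ℕ → Fin n → PState),
      k1 ≤ n ∧ k2 ≤ n ∧ k3 ≤ n ∧
      w 0 = embed x ∧ w (k1 + k2 + k3) = embed y ∧
      (∀ t < k1 + k2 + k3, mpStep f (w t) (w (t+1))) ∧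
      (∀ t < k1, ∀ j, w t j ≠ w (t+1) j →
        (w t j).isBool ∧ ¬ (w (t+1) j).isBool) ∧
      (∀ t, k1 ≤ t → t < k1 + k2 → ∀ j, w t j ≠ w (t+1) j →
        ¬ (w t j).isBool ∧ ¬ (w (t+1) j).isBool) ∧
      (∀ t, k1 + k2 ≤ t → t < k1 + k2 + k3 → ∀ j, w t j ≠ w (t+1) j →
        ¬ (w t j).isBool ∧ (w (t+1) j).isBool) := by
  obtain ⟨A, B, hW⟩ := exists_threePhase h
  obtain ⟨k₁, hk₁, h₁⟩ := hW.exists_phase₁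
  obtain ⟨k₂, hk₂, h₂⟩ := hW.exists_phase₂
  obtain ⟨k₃, hk₃, h₃⟩ := hW.exists_phase₃
  obtain ⟨w, h0, hend, hw₁, hw₂, hw₃⟩ := h₁.exists_append₃ h₂ h₃
  refine ⟨k₁, k₂, k₃, w, hk₁, hk₂, hk₃, h0, hend, fun t ht => ?_, fun t ht => (hw₁ t ht).2,
    fun t h h' => (hw₂ t h h').2, fun t h h' => (hw₃ t h h').2⟩
  rcases lt_or_ge t k₁ with h₁ | h₁
  · exact (hw₁ t h₁).1
  rcases lt_or_ge t (k₁ + k₂) with h₂ | h₂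
  · exact (hw₂ t h₁ h₂).1
  · exact (hw₃ t h₂ ht).1
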